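/- Let m ≥ 3 and let ℓ ≥ 1 be an integer with 2ℓ+1 < 2^m−1. Then N(2ℓ+1, 0, F_{2^m}^*) = (1/2^m)·Σ_{t=0}^{ℓ−1} (−1)^t · ( Π_{j=0}^{t−1} (2^m − 2(ℓ−j))/(2(ℓ−j)) ) · binom(2^m, 2ℓ+1−2t), where the empty product (t = 0) is interpreted as 1. -/

import Mathlib

open Finset

/-- `Nsub k D` is the number of `k`-element subsets `{x₁, …, xₖ}` of `D` with
`x₁ + x₂ + ⋯ + xₖ = 0`. -/
def Nsub {F : Type*} [DecidableEq F] [AddCommMonoid F] (k : ℕ) (D : Finset F) : ℕ :=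
  ((D.powersetCard k).filter fun s => s.sum id = 0).card

section aux
variable {F : Type*} [Field F] [Fintype F] [DecidableEq F]

lemma odd_nsmul_eq (h2 : ∀ x : F, x + x = 0) {n : ℕ} (hn : Odd n) (x : F) : n • x = x := by
  obtain ⟨p, rfl⟩ := hn
  have : (2 * p + 1) • x = p • (x + x) + x := by
    rw [add_nsmul, one_nsmul, mul_comm, mul_nsmul, two_nsmul, smul_add]
  rw [this, h2, smul_zero, zero_add]

lemma lemA (h2 : ∀ x : F, x + x = 0) {k : ℕ} (hk : Odd k) :
    Fintype.card F * ((Finset.powersetCard k (univ : Finset F)).filter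
      fun s => s.sum id = 0).card = (Fintype.card F).choose k := by
  have key : ∀ c : F, ((Finset.powersetCard k (univ : Finset F)).filter
      fun s => s.sum id = c).card = ((Finset.powersetCard k (univ : Finset F)).filter
      fun s => s.sum id = 0).card := by
    intro c
    have hinj : Function.Injective (fun x : F => x + c) := add_left_injective c
    have himg : ∀ s : Finset F, s.card = k → (s.image (fun x => x + c)).sum id
        = s.sum id + c := by
      intro s hs
      rw [Finset.sum_image (fun x _ y _ h => hinj h)]
      simp only [id]
      rw [Finset.sum_add_distrib, Finset.sum_const, hs, odd_nsmul_eq h2 hk]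
    refine Finset.card_bij' (fun s _ => s.image (fun x => x + c))
      (fun s _ => s.image (fun x => x + c)) ?_ ?_ ?_ ?_
    · intro s hs
      simp only [mem_filter, mem_powersetCard] at hs ⊢
      obtain ⟨⟨_, hcard⟩, hsum⟩ := hs
      refine ⟨⟨subset_univ _, by rw [Finset.card_image_of_injective _ hinj, hcard]⟩, ?_⟩
      rw [himg s hcard, hsum, h2]
    · intro s hs
      simp only [mem_filter, mem_powersetCard] at hs ⊢
      obtain ⟨⟨_, hcard⟩, hsum⟩ := hs
      refine ⟨⟨subset_univ _, by rw [Finset.card_image_of_injective _ hinj, hcard]⟩, ?_⟩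
      rw [himg s hcard, hsum, zero_add]
    · intro s _
      rw [Finset.image_image]
      have : ((fun x : F => x + c) ∘ fun x : F => x + c) = id := by
        funext x; simp [add_assoc, h2]
      rw [this, Finset.image_id]
    · intro s _
      rw [Finset.image_image]
      have : ((fun x : F => x + c) ∘ fun x : F => x + c) = id := by
        funext x; simp [add_assoc, h2]
      rw [this, Finset.image_id]
  have hsplit := Finset.card_eq_sum_card_fiberwise
    (f := fun s : Finset F => s.sum id) (s := Finset.powersetCard k (univ : Finset F))
    (t := univ) (fun x _ => mem_univ _)
  rw [Finset.card_powersetCard, Finset.card_univ] at hsplit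
  rw [hsplit]
  rw [Finset.sum_congr rfl (fun c _ => key c), Finset.sum_const, Finset.card_univ, smul_eq_mul]

lemma lemB (n : ℕ) :
    ((Finset.powersetCard (n+1) (univ : Finset F)).filter fun s => s.sum id = 0).card
      = Nsub (n+1) ({0}ᶜ : Finset F) + Nsub n ({0}ᶜ : Finset F) := by
  classical
  set S := (Finset.powersetCard (n+1) (univ : Finset F)).filter fun s => s.sum id = 0 with hS
  have hsplit := Finset.card_filter_add_card_filter_not
    (s := S) (p := fun s : Finset F => (0 : F) ∈ s)
  have h1 : (S.filter fun s => ¬ (0:F) ∈ s) = (({0}ᶜ : Finset F).powersetCard (n+1)).filter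
      fun s => s.sum id = 0 := by
    have hcs : ∀ s : Finset F, s ⊆ ({0}ᶜ : Finset F) ↔ (0:F) ∉ s := by
      intro s
      constructor
      · intro h h0; simpa using h h0
      · intro h x hx
        simp only [Finset.mem_compl, Finset.mem_singleton]
        exact fun he => h (he ▸ hx)
    ext s
    simp only [hS, mem_filter, mem_powersetCard, hcs, subset_univ, true_and]
    tauto
  have h2' : (S.filter fun s => (0:F) ∈ s).card = Nsub n ({0}ᶜ : Finset F) := by
    rw [Nsub]
    refine Finset.card_bij' (fun s _ => s.erase 0) (fun t _ => insert 0 t) ?_ ?_ ?_ ?_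
    · intro s hs
      simp only [hS, mem_filter, mem_powersetCard] at hs
      obtain ⟨⟨⟨_, hcard⟩, hsum⟩, h0⟩ := hs
      simp only [mem_filter, mem_powersetCard]
      refine ⟨⟨?_, ?_⟩, ?_⟩
      · intro x hx
        simp only [Finset.mem_compl, Finset.mem_singleton]
        exact (Finset.mem_erase.mp hx).1
      · rw [Finset.card_erase_of_mem h0, hcard]; rfl
      · rw [Finset.sum_erase _ (by simp : (id (0:F)) = 0)]; exact hsum
    · intro t ht
      simp only [mem_filter, mem_powersetCard] at ht
      obtain ⟨⟨hsub, hcard⟩, hsum⟩ := ht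
      have h0t : (0:F) ∉ t := fun h => by simpa using hsub h
      simp only [hS, mem_filter, mem_powersetCard]
      exact ⟨⟨⟨subset_univ _, by rw [Finset.card_insert_of_notMem h0t, hcard]⟩,
        by rw [Finset.sum_insert h0t]; simpa using hsum⟩, Finset.mem_insert_self 0 t⟩
    · intro s hs
      simp only [hS, mem_filter] at hs
      exact Finset.insert_erase hs.2
    · intro t ht
      simp only [mem_filter, mem_powersetCard] at ht
      have h0t : (0:F) ∉ t := fun h => by simpa using ht.1.1 h
      exact Finset.erase_insert h0t
  have h1' : (S.filter fun s => ¬ (0:F) ∈ s).card = Nsub (n+1) ({0}ᶜ : Finset F) := by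
    rw [Nsub, ← h1]
  omega

lemma lemC (h2 : ∀ x : F, x + x = 0) (p : ℕ) :
    (2*p+2) * Nsub (2*p+2) ({0}ᶜ : Finset F)
      = (Fintype.card F - (2*p+2)) * Nsub (2*p+1) ({0}ᶜ : Finset F) := by
  classical
  set n := 2*p+1 with hn
  have hodd : Odd n := ⟨p, by omega⟩
  have hc : ∀ a b : F, a + b = 0 → a = b := by
    intro a b h
    calc a = a + (b + b) := by rw [h2, add_zero]
    _ = (a + b) + b := by rw [add_assoc]
    _ = b := by rw [h, zero_add]
  have hinj : ∀ x : F, Function.Injective (fun y : F => y + x) := fun x => add_left_injective x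
  set S := (({0}ᶜ : Finset F).powersetCard (n+1)).filter (fun s => s.sum id = 0) with hSdef
  set T := (({0}ᶜ : Finset F).powersetCard n).filter (fun s => s.sum id = 0) with hTdef
  set A := S.sigma (fun s => s) with hAdef
  set B := T.sigma (fun t => (insert (0:F) t)ᶜ) with hBdef
  have hcardA : A.card = (n+1) * S.card := by
    rw [hAdef, Finset.card_sigma]
    rw [Finset.sum_congr rfl (fun s hs => ?_), Finset.sum_const, smul_eq_mul, mul_comm]
    rw [hSdef] at hs
    exact (Finset.mem_powersetCard.mp (Finset.mem_filter.mp hs).1).2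
  have hcardB : B.card = (Fintype.card F - (n+1)) * T.card := by
    rw [hBdef, Finset.card_sigma]
    rw [Finset.sum_congr rfl (fun t ht => ?_), Finset.sum_const, smul_eq_mul, mul_comm]
    rw [hTdef] at ht
    obtain ⟨⟨hsub, hcard⟩, _⟩ := Finset.mem_filter.mp ht |>.imp
      (fun h => Finset.mem_powersetCard.mp h) id
    have h0t : (0:F) ∉ t := fun h => by simpa using hsub h
    rw [Finset.card_compl, Finset.card_insert_of_notMem h0t, hcard]
  have hmemS : ∀ s : Finset F, s ∈ S ↔ (s ⊆ {0}ᶜ ∧ s.card = n+1) ∧ s.sum id = 0 := by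
    intro s; rw [hSdef, Finset.mem_filter, Finset.mem_powersetCard]
  have hmemT : ∀ t : Finset F, t ∈ T ↔ (t ⊆ {0}ᶜ ∧ t.card = n) ∧ t.sum id = 0 := by
    intro t; rw [hTdef, Finset.mem_filter, Finset.mem_powersetCard]
  have hne0 : ∀ {s : Finset F} {x : F}, s ⊆ ({0}ᶜ : Finset F) → x ∈ s → x ≠ 0 := by
    intro s x hsub hx he
    have := hsub hx
    rw [he] at this
    simpa using this
  have hsum_img : ∀ (u : Finset F) (x : F), (u.image (fun y => y + x)).sum id
      = u.sum id + u.card • x := by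
    intro u x
    rw [Finset.sum_image (fun a _ b _ h => hinj x h)]
    simp only [id]
    rw [Finset.sum_add_distrib, Finset.sum_const]
  have hAB : A.card = B.card := by
    refine Finset.card_bij'
      (fun a _ => ⟨(a.1.erase a.2).image (fun y => y + a.2), a.2⟩)
      (fun b _ => ⟨insert b.2 (b.1.image (fun y => y + b.2)), b.2⟩) ?_ ?_ ?_ ?_
    · rintro ⟨s, x⟩ ha
      rw [hAdef, Finset.mem_sigma] at ha
      obtain ⟨hsS, hx⟩ := ha
      obtain ⟨⟨hsub, hcard⟩, hsum⟩ := (hmemS s).mp hsS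
      have hxne : x ≠ 0 := hne0 hsub hx
      set u := s.erase x with hu
      have hucard : u.card = n := by rw [hu, Finset.card_erase_of_mem hx, hcard]; rfl
      have husum : u.sum id = x := by
        have h0 : u.sum id + id x = s.sum id := Finset.sum_erase_add s id hx
        have h0' : u.sum id + x = 0 := by rw [← hsum]; exact h0
        exact hc _ _ h0'
      rw [hBdef, Finset.mem_sigma]
      constructor
      · rw [hmemT]
        refine ⟨⟨?_, ?_⟩, ?_⟩
        · intro z hz
          obtain ⟨y, hy, rfl⟩ := Finset.mem_image.mp hz
          simp only [Finset.mem_compl, Finset.mem_singleton]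
          intro he
          exact (Finset.mem_erase.mp hy).1 (hc _ _ he)
        · rw [Finset.card_image_of_injective _ (hinj x), hucard]
        · rw [hsum_img, husum, hucard, odd_nsmul_eq h2 hodd, h2]
      · simp only [Finset.mem_compl, Finset.mem_insert, not_or]
        refine ⟨hxne, ?_⟩
        intro hmem
        obtain ⟨y, hy, hyx⟩ := Finset.mem_image.mp hmem
        have hy0 : y = 0 := by
          have : y + x = 0 + x := by rw [hyx, zero_add]
          exact add_right_cancel this
        exact (hne0 hsub (Finset.mem_of_mem_erase hy)) hy0
    · rintro ⟨t, y⟩ hb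
      rw [hBdef, Finset.mem_sigma] at hb
      obtain ⟨htT, hy⟩ := hb
      obtain ⟨⟨hsub, hcard⟩, hsum⟩ := (hmemT t).mp htT
      simp only [Finset.mem_compl, Finset.mem_insert, not_or] at hy
      obtain ⟨hyne, hyt⟩ := hy
      have hynotimg : y ∉ t.image (fun z => z + y) := by
        intro hmem
        obtain ⟨z, hz, hzy⟩ := Finset.mem_image.mp hmem
        have : z = 0 := by
          have : z + y = 0 + y := by rw [hzy, zero_add]
          exact add_right_cancel this
        rw [this] at hz
        simpa using hsub hz
      rw [hAdef, Finset.mem_sigma]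
      constructor
      · rw [hmemS]
        refine ⟨⟨?_, ?_⟩, ?_⟩
        · intro z hz
          rcases Finset.mem_insert.mp hz with rfl | hz'
          · simpa using hyne
          · obtain ⟨w, hw, rfl⟩ := Finset.mem_image.mp hz'
            simp only [Finset.mem_compl, Finset.mem_singleton]
            intro he
            exact hyt ((hc _ _ he) ▸ hw)
        · rw [Finset.card_insert_of_notMem hynotimg,
            Finset.card_image_of_injective _ (hinj y), hcard]
        · rw [Finset.sum_insert hynotimg, hsum_img, hsum, hcard,
            odd_nsmul_eq h2 hodd, zero_add]
          exact h2 y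
      · exact Finset.mem_insert_self y _
    · rintro ⟨s, x⟩ ha
      rw [hAdef, Finset.mem_sigma] at ha
      obtain ⟨hsS, hx⟩ := ha
      dsimp only
      have hcomp : ((fun y : F => y + x) ∘ fun y : F => y + x) = id := by
        funext z; simp [add_assoc, h2]
      have hs' : insert x (Finset.image (fun y => y + x)
          (Finset.image (fun y => y + x) (s.erase x))) = s := by
        rw [Finset.image_image, hcomp, Finset.image_id, Finset.insert_erase hx]
      exact congrArg (fun z : Finset F => (⟨z, x⟩ : (_ : Finset F) × F)) hs'
    · rintro ⟨t, y⟩ hb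
      rw [hBdef, Finset.mem_sigma] at hb
      obtain ⟨htT, hy⟩ := hb
      obtain ⟨⟨hsub, _⟩, _⟩ := (hmemT t).mp htT
      simp only [Finset.mem_compl, Finset.mem_insert, not_or] at hy
      have hynotimg : y ∉ t.image (fun z => z + y) := by
        intro hmem
        obtain ⟨z, hz, hzy⟩ := Finset.mem_image.mp hmem
        have : z = 0 := by
          have : z + y = 0 + y := by rw [hzy, zero_add]
          exact add_right_cancel this
        rw [this] at hz
        simpa using hsub hz
      dsimp only
      have hcomp : ((fun z : F => z + y) ∘ fun z : F => z + y) = id := by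
        funext z; simp [add_assoc, h2]
      have ht' : Finset.image (fun z => z + y)
          ((insert y (Finset.image (fun z => z + y) t)).erase y) = t := by
        rw [Finset.erase_insert hynotimg, Finset.image_image, hcomp, Finset.image_id]
      exact congrArg (fun z : Finset F => (⟨z, y⟩ : (_ : Finset F) × F)) ht'
  have : (n+1) * S.card = (Fintype.card F - (n+1)) * T.card := by
    rw [← hcardA, ← hcardB, hAB]
  simpa [Nsub, hSdef, hTdef, hn, show 2*p+1+1 = 2*p+2 from rfl] using this

lemma nsub_one : Nsub 1 ({0}ᶜ : Finset F) = 0 := by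
  rw [Nsub, Finset.card_eq_zero, Finset.eq_empty_iff_forall_notMem]
  intro s hs
  rw [Finset.mem_filter, Finset.mem_powersetCard] at hs
  obtain ⟨⟨hsub, hcard⟩, hsum⟩ := hs
  obtain ⟨a, rfl⟩ := Finset.card_eq_one.mp hcard
  rw [Finset.sum_singleton] at hsum
  simp only [id_eq] at hsum
  have := hsub (Finset.mem_singleton_self a)
  rw [hsum] at this
  simpa using this

end aux


theorem stmt15 (m ℓ : ℕ) (hm : 3 ≤ m) (hℓ : 1 ≤ ℓ) (hlt : 2 * ℓ + 1 < 2 ^ m - 1)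
    (F : Type*) [Field F] [Fintype F] [DecidableEq F]
    (hcard : Fintype.card F = 2 ^ m) :
    (Nsub (2 * ℓ + 1) ({0}ᶜ : Finset F) : ℚ) =
      (1 / (2 : ℚ) ^ m) *
        ∑ t ∈ Finset.range ℓ, (-1 : ℚ) ^ t *
          (∏ j ∈ Finset.range t,
            ((2 : ℚ) ^ m - 2 * ((ℓ : ℚ) - (j : ℚ))) / (2 * ((ℓ : ℚ) - (j : ℚ)))) *
          ((2 ^ m).choose (2 * ℓ + 1 - 2 * t) : ℚ) := by
  classical
  have hQ8 : 8 ≤ 2 ^ m := by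
    calc (8:ℕ) = 2 ^ 3 := by norm_num
    _ ≤ 2 ^ m := Nat.pow_le_pow_right (by norm_num) hm
  -- characteristic 2
  have h2 : ∀ x : F, x + x = 0 := by
    have hc0 : ((Fintype.card F : ℕ) : F) = 0 := FiniteField.cast_card_eq_zero F
    rw [hcard] at hc0
    push_cast at hc0
    have h20 : (2 : F) = 0 := by
      have := pow_eq_zero_iff (n := m) (by omega) |>.mp hc0
      exact this
    intro x
    calc x + x = 2 * x := by ring
    _ = 0 := by rw [h20, zero_mul]
  -- fact 1
  have fact1 : ∀ p : ℕ, 2 ^ m * (Nsub (2*p+1) ({0}ᶜ : Finset F) + Nsub (2*p) ({0}ᶜ : Finset F))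
      = (2 ^ m).choose (2*p+1) := by
    intro p
    have hA := lemA (F := F) h2 (k := 2*p+1) ⟨p, by omega⟩
    have hB := lemB (F := F) (2*p)
    rw [hcard] at hA
    rw [hB] at hA
    exact hA
  -- fact 2
  have fact2 : ∀ p : ℕ, (2*p+2) * Nsub (2*p+2) ({0}ᶜ : Finset F)
      = (2 ^ m - (2*p+2)) * Nsub (2*p+1) ({0}ᶜ : Finset F) := by
    intro p
    have := lemC (F := F) h2 p
    rwa [hcard] at this
  have key : ∀ L : ℕ, 1 ≤ L → 2 * L + 1 < 2 ^ m - 1 →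
      ((2:ℚ) ^ m) * (Nsub (2 * L + 1) ({0}ᶜ : Finset F) : ℚ) =
        ∑ t ∈ Finset.range L, (-1 : ℚ) ^ t *
          (∏ j ∈ Finset.range t,
            ((2 : ℚ) ^ m - 2 * ((L : ℚ) - (j : ℚ))) / (2 * ((L : ℚ) - (j : ℚ)))) *
          ((2 ^ m).choose (2 * L + 1 - 2 * t) : ℚ) := by
    intro L hL1
    induction L, hL1 using Nat.le_induction with
    | base =>
      intro _
      have ha0 : Nsub 1 ({0}ᶜ : Finset F) = 0 := nsub_one
      have h1 := fact1 1
      have h20 := fact2 0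
      norm_num at h20 h1
      rw [ha0, mul_zero] at h20
      have hb : Nsub 2 ({0}ᶜ : Finset F) = 0 := by omega
      rw [hb, add_zero] at h1
      have hgoal := congrArg (fun x : ℕ => (x : ℚ)) h1
      push_cast at hgoal
      norm_num [Finset.sum_range_one]
      convert hgoal using 2 <;> norm_num
    | succ L hL IH =>
      intro hlt'
      have hlt'' : 2 * L + 1 < 2 ^ m - 1 := by omega
      have IH' := IH hlt''
      -- relations
      have e1 : ((2:ℚ))^m * ((Nsub (2*(L+1)+1) ({0}ᶜ : Finset F) : ℚ)
          + (Nsub (2*(L+1)) ({0}ᶜ : Finset F) : ℚ)) = ((2^m).choose (2*(L+1)+1) : ℚ) := by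
        have := congrArg (fun x : ℕ => (x : ℚ)) (fact1 (L+1))
        push_cast at this
        push_cast
        linarith [this]
      have hle : 2*L+2 ≤ 2^m := by omega
      have e2 : ((2*L+2 : ℕ) : ℚ) * (Nsub (2*(L+1)) ({0}ᶜ : Finset F) : ℚ)
          = ((2:ℚ)^m - (2*L+2 : ℕ)) * (Nsub (2*L+1) ({0}ᶜ : Finset F) : ℚ) := by
        have := congrArg (fun x : ℕ => (x : ℚ)) (fact2 L)
        push_cast [Nat.cast_sub hle] at this
        have h22 : 2*(L+1) = 2*L+2 := by ring
        rw [h22]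
        push_cast
        push_cast at this
        linarith [this]
      set Q : ℚ := (2:ℚ)^m with hQdef
      set aa : ℚ := (Nsub (2*(L+1)+1) ({0}ᶜ : Finset F) : ℚ) with haa
      set bb : ℚ := (Nsub (2*(L+1)) ({0}ᶜ : Finset F) : ℚ) with hbb
      set aL : ℚ := (Nsub (2*L+1) ({0}ᶜ : Finset F) : ℚ) with haL
      set r : ℚ := (Q - (2*L+2)) / (2*L+2) with hr
      have hden : ((2:ℚ)*L+2) ≠ 0 := by positivity
      have e2' : bb = r * aL := by
        rw [hr]
        field_simp
        push_cast at e2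
        linarith [e2]
      have estep : Q * aa = ((2^m).choose (2*(L+1)+1) : ℚ) - r * (Q * aL) := by
        have := e1
        rw [e2'] at this
        ring_nf at this ⊢
        linarith [this]
      rw [estep, IH']
      -- now sum manipulation
      rw [Finset.sum_range_succ']
      have hterm : ∀ t ∈ Finset.range L, (-1 : ℚ) ^ (t+1) *
          (∏ j ∈ Finset.range (t+1),
            (Q - 2 * (((L+1 : ℕ) : ℚ) - (j : ℚ))) / (2 * (((L+1 : ℕ) : ℚ) - (j : ℚ)))) *
          ((2 ^ m).choose (2 * (L+1) + 1 - 2 * (t+1)) : ℚ)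
          = -r * ((-1 : ℚ) ^ t *
            (∏ j ∈ Finset.range t,
              (Q - 2 * ((L : ℚ) - (j : ℚ))) / (2 * ((L : ℚ) - (j : ℚ)))) *
            ((2 ^ m).choose (2 * L + 1 - 2 * t) : ℚ)) := by
        intro t ht
        rw [Finset.mem_range] at ht
        have hchoose : 2 * (L+1) + 1 - 2 * (t+1) = 2 * L + 1 - 2 * t := by omega
        rw [hchoose]
        have hprod : (∏ j ∈ Finset.range (t+1),
            (Q - 2 * (((L+1 : ℕ) : ℚ) - (j : ℚ))) / (2 * (((L+1 : ℕ) : ℚ) - (j : ℚ))))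
            = (∏ j ∈ Finset.range t,
              (Q - 2 * ((L : ℚ) - (j : ℚ))) / (2 * ((L : ℚ) - (j : ℚ)))) * r := by
          rw [Finset.prod_range_succ']
          congr 1
          · refine Finset.prod_congr rfl (fun j _ => ?_)
            push_cast
            ring_nf
          · rw [hr]
            push_cast
            ring_nf
        rw [hprod]
        ring
      rw [Finset.sum_congr rfl hterm, ← Finset.mul_sum]
      simp only [pow_zero, Finset.prod_range_zero, mul_one, one_mul, Nat.mul_zero,
        Nat.sub_zero]
      ring
  have hkey := key ℓ hℓ hlt
  have hQne : ((2:ℚ)^m) ≠ 0 := by positivity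
  rw [← hkey, one_div, inv_mul_cancel_left₀ hQne]
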